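/- arXiv:1608.00787 — 2 statements merged into one kernel-verified Lean document; each statement's English description precedes it below -/
import Mathlib

section
/- Let L be a complete lattice, H a set, η : H → L with L generated by η(H), F : Set H → Set H monotone, and T : L → L such that ⟦η⟧ ∘ F = T ∘ ⟦η⟧, where ⟦η⟧(X) = ⋁ { η(x) | x ∈ X }. Then lfp(T) = ⟦η⟧(lfp(F)). -/
theorem correctness_criterion {H : Type*} {L : Type*} [CompleteLattice L]
    (η : H → L) (T : L → L)
    (hgen : ∀ x : L, ∃ X : Set H, x = ⨆ h ∈ X, η h)
    (F : Set H → Set H) (hF : Monotone F)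
    (hcomm : ∀ X : Set H, (⨆ h ∈ F X, η h) = T (⨆ h ∈ X, η h)) :
    sInf {x : L | T x ≤ x} = ⨆ h ∈ sInf {X : Set H | F X ≤ X}, η h := by
  set M : Set H := sInf {X : Set H | F X ≤ X} with hM
  apply le_antisymm
  · apply sInf_le
    have hpre : F M ≤ M := by
      apply le_sInf
      intro X hX
      exact le_trans (hF (sInf_le hX)) hX
    show T (⨆ h ∈ M, η h) ≤ ⨆ h ∈ M, η h
    calc T (⨆ h ∈ M, η h) = ⨆ h ∈ F M, η h := (hcomm M).symm
      _ ≤ ⨆ h ∈ M, η h := biSup_mono hpre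
  · apply le_sInf
    intro x hx
    obtain ⟨X, rfl⟩ := hgen x
    set X' : Set H := {h | η h ≤ ⨆ h ∈ X, η h} with hX'
    have hXsub : X ⊆ X' := fun h hh => le_iSup₂ (f := fun h _ => η h) h hh
    have hX'eq : (⨆ h ∈ X', η h) = ⨆ h ∈ X, η h :=
      le_antisymm (iSup₂_le fun h hh => hh) (biSup_mono hXsub)
    have hfix : F X' ≤ X' := by
      intro h hh
      have h1 : η h ≤ ⨆ g ∈ F X', η g := le_iSup₂ (f := fun h _ => η h) h hh
      calc η h ≤ ⨆ g ∈ F X', η g := h1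
        _ = T (⨆ g ∈ X', η g) := hcomm X'
        _ = T (⨆ g ∈ X, η g) := by rw [hX'eq]
        _ ≤ _ := hx
    calc ⨆ h ∈ M, η h ≤ ⨆ h ∈ X', η h := biSup_mono (show M ⊆ X' from sInf_le hfix)
      _ = ⨆ h ∈ X, η h := hX'eq
end

section
/- With H = {0,1,2,3} and T : Set H → Set H given by T(X) = {0,1} ∪ {2 | 1 ∈ X} ∪ {3 | 0 ∈ X}, let L = WithBot ℕ (the naturals with a bottom element ⊥, ordered usually, with max as join), define η : H → L by η(n) = n, and let ⟦η⟧(X) = sup of η over X. Then the greedy condition fails: ⟦η⟧(T({0,1})) ≠ ⟦η⟧(T(ρ(⟦η⟧({0,1})))), where ρ(⊥) = ∅ and ρ(n) = {n}. Concretely, the left side equals 3 and the right side equals 2. -/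
lemma iSup_mem_eq {X : Set (Fin 4)} {f : Fin 4 → WithBot ℕ} {m : Fin 4}
    (hm : m ∈ X) (hb : ∀ h ∈ X, f h ≤ f m) : ⨆ h ∈ X, f h = f m := by
  apply le_antisymm
  · apply ciSup_le
    intro h
    by_cases hX : h ∈ X
    · haveI := uniqueProp hX
      rw [ciSup_unique]
      exact hb h hX
    · haveI : IsEmpty (h ∈ X) := ⟨hX⟩
      rw [iSup, Set.range_eq_empty, WithBot.sSup_empty]
      exact bot_le
  · have h1 : f m ≤ ⨆ _ : m ∈ X, f m := by
      haveI := uniqueProp hm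
      rw [ciSup_unique]
    refine h1.trans (le_ciSup (f := fun h => ⨆ _ : h ∈ X, f h) ?_ m)
    exact (Set.finite_range _).bddAbove

theorem greedy_condition_fails :
    let T : Set (Fin 4) → Set (Fin 4) :=
      fun X => {0, 1} ∪ {x | x = 2 ∧ 1 ∈ X} ∪ {x | x = 3 ∧ 0 ∈ X}
    let η : Fin 4 → WithBot ℕ := fun n => ((n : ℕ) : WithBot ℕ)
    let interp : Set (Fin 4) → WithBot ℕ := fun X => ⨆ h ∈ X, η h
    let ρ : WithBot ℕ → Set (Fin 4) := fun l => {h | η h = l ∧ l ≠ ⊥}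
    interp (T {0, 1}) = (3 : ℕ) ∧
      interp (T (ρ (interp {0, 1}))) = (2 : ℕ) ∧
      interp (T {0, 1}) ≠ interp (T (ρ (interp {0, 1}))) := by
  intro T η interp ρ
  have h1 : interp {0, 1} = ((1 : ℕ) : WithBot ℕ) := by
    apply iSup_mem_eq (m := 1) (by simp)
    intro h hh
    fin_cases h <;> simp_all [η] <;> decide
  have hρ : ρ (interp {0, 1}) = {1} := by
    rw [show ρ (interp {0, 1}) = ρ ((1 : ℕ) : WithBot ℕ) from by rw [h1]]
    ext h
    fin_cases h <;> simp [ρ, η] <;> decide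
  have hL : interp (T {0, 1}) = ((3 : ℕ) : WithBot ℕ) := by
    apply iSup_mem_eq (m := 3)
    · simp [T]
    · intro h hh
      fin_cases h <;> simp [η] <;> decide
  have hR : interp (T (ρ (interp {0, 1}))) = ((2 : ℕ) : WithBot ℕ) := by
    rw [show T (ρ (interp {0, 1})) = T {1} from by rw [hρ]]
    apply iSup_mem_eq (m := 2)
    · simp [T]
    · intro h hh
      fin_cases h <;> simp_all [T, η] <;> decide
  refine ⟨hL, hR, ?_⟩
  rw [hL, hR]
  decide
end
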